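/- Let n ≥ 4 be a composite integer. The zero divisor graph Γ(Z_n) is Laplacian integral if and only if all eigenvalues of the vertex weighted Laplacian matrix L(Υ_n) are integers. -/

import Mathlib

open scoped BigOperators

/-- Vertex set of the zero divisor graph of `ZMod n`: the nonzero zero divisors. -/
abbrev ZdVert (n : ℕ) : Type :=
  {x : ZMod n // x ≠ 0 ∧ ∃ y : ZMod n, y ≠ 0 ∧ x * y = 0}

/-- The zero divisor graph `Γ(ZMod n)`: vertices are the nonzero zero divisors, and two
distinct vertices are adjacent iff their product is zero. -/
def zdGraph (n : ℕ) : SimpleGraph (ZdVert n) where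
  Adj a b := a ≠ b ∧ (a : ZMod n) * (b : ZMod n) = 0
  symm := by
    constructor
    rintro a b ⟨hne, h⟩
    exact ⟨hne.symm, by rwa [mul_comm]⟩
  loopless := ⟨fun a h => h.1 rfl⟩

instance (n : ℕ) : DecidableRel (zdGraph n).Adj :=
  fun a b => inferInstanceAs (Decidable (a ≠ b ∧ (a : ZMod n) * (b : ZMod n) = 0))

instance (n : ℕ) (s : Set (ZdVert n)) [DecidablePred (· ∈ s)] :
    DecidableRel ((zdGraph n).induce s).Adj :=
  fun a b => inferInstanceAs (Decidable ((zdGraph n).Adj a b))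

/-- The set `A_d = {x ∈ ZMod n : gcd(x, n) = d}`, viewed inside the vertex set of the
zero divisor graph. -/
def fiberSet (n : ℕ) (d : ℕ) : Set (ZdVert n) :=
  {v | Nat.gcd (v : ZMod n).val n = d}

instance (n d : ℕ) : DecidablePred (· ∈ fiberSet n d) :=
  fun v => inferInstanceAs (Decidable (Nat.gcd (v : ZMod n).val n = d))

/-- The proper divisors of `n`: the divisors `d` of `n` with `1 < d < n`. -/
def properDivs (n : ℕ) : Finset ℕ :=
  (Nat.divisors n).filter fun d => 1 < d ∧ d < n

/-- The graph `Υ_n` on the proper divisors of `n`, where distinct `d_i`, `d_j` are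
adjacent iff `n ∣ d_i * d_j`. -/
def upsilon (n : ℕ) : SimpleGraph {d // d ∈ properDivs n} where
  Adj a b := a ≠ b ∧ n ∣ a.val * b.val
  symm := by
    constructor
    rintro a b ⟨hne, h⟩
    exact ⟨hne.symm, by rwa [mul_comm]⟩
  loopless := ⟨fun a h => h.1 rfl⟩

instance (n : ℕ) : DecidableRel (upsilon n).Adj :=
  fun a b => inferInstanceAs (Decidable (a ≠ b ∧ n ∣ a.val * b.val))

/-- `M_d`: the sum of the weights `φ(n/e)` over the neighbours `e` of `d` in `Υ_n`. -/
def Mweight (n : ℕ) (d : {d // d ∈ properDivs n}) : ℕ :=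
  ∑ e ∈ Finset.univ.filter (fun e => (upsilon n).Adj d e), Nat.totient (n / e.val)

/-- The vertex weighted Laplacian matrix `L(Υ_n)` of `Υ_n`, where the vertex `d` of `Υ_n`
carries the weight `φ(n/d)`. -/
noncomputable def wLap (n : ℕ) :
    Matrix {d // d ∈ properDivs n} {d // d ∈ properDivs n} ℝ :=
  fun i j =>
    if i = j then (Mweight n i : ℝ)
    else if (upsilon n).Adj i j then -(Nat.totient (n / j.val) : ℝ)
    else 0

/-!
Sort the vertices of `Γ(ℤ_n)` by `d = gcd(n, x)`. Whether two distinct vertices are adjacent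
depends only on their classes (`n ∣ d * e`), so `Γ(ℤ_n)` is a blow-up of the relation
`n ∣ d * e` on proper divisors, with classes of size `φ(n/d)`. The Laplacian maps functions
that are constant on classes to such functions, acting on them as `L(Υ_n)`; as no class is
empty, every eigenvalue of `L(Υ_n)` is one of `L(Γ(ℤ_n))`. Conversely, take an eigenvector
`u` of `L(Γ(ℤ_n))`. If all its class sums vanish, the Laplacian acts on `u` diagonally,
multiplying `u x` by the number of vertices in the classes related to that of `x`, so the
eigenvalue is an integer. Otherwise the vector of class sums is an eigenvector of `L(Υ_n)ᵀ`,
which has the spectrum of `L(Υ_n)`.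
-/

open Finset Matrix

theorem Matrix.mem_spectrum_iff_exists_mulVec_eq_smul {ι K : Type*} [Fintype ι]
    [DecidableEq ι] [Field K] {A : Matrix ι ι K} {z : K} :
    z ∈ spectrum K A ↔ ∃ v ≠ 0, A *ᵥ v = z • v := by
  rw [← spectrum_toLin', ← Module.End.hasEigenvalue_iff_mem_spectrum,
    Module.End.hasEigenvalue_iff, Submodule.ne_bot_iff]
  simp only [Module.End.mem_eigenspace_iff, toLin'_apply]
  exact ⟨fun ⟨v, hv, h0⟩ => ⟨v, h0, hv⟩, fun ⟨v, h0, hv⟩ => ⟨v, hv, h0⟩⟩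

theorem Matrix.spectrum_transpose {ι K : Type*} [Fintype ι] [DecidableEq ι] [Field K]
    (A : Matrix ι ι K) : spectrum K Aᵀ = spectrum K A :=
  Set.ext fun _ => by
    rw [mem_spectrum_iff_isRoot_charpoly, mem_spectrum_iff_isRoot_charpoly, charpoly_transpose]

theorem SimpleGraph.map_lapMatrix {V R S : Type*} [Fintype V] [DecidableEq V] [Ring R] [Ring S]
    (G : SimpleGraph V) [DecidableRel G.Adj] (φ : R →+* S) :
    (G.lapMatrix R).map φ = G.lapMatrix S := by
  ext i j
  simp only [map_apply, SimpleGraph.lapMatrix, SimpleGraph.degMatrix, Matrix.sub_apply,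
    SimpleGraph.adjMatrix_apply, diagonal_apply]
  split_ifs <;> simp

section Blowup

variable {V ι K : Type*} [Fintype V] [DecidableEq ι] [CommRing K] {f : V → ι}

def fiberSum (f : V → ι) (u : V → K) (e : ι) : K :=
  ∑ x with f x = e, u x

theorem fiberSum_comp (v : ι → K) (e : ι) : fiberSum f (v ∘ f) e = #{x | f x = e} * v e := by
  rw [fiberSum, sum_congr rfl fun x hx => by rw [Function.comp_apply, (mem_filter.mp hx).2],
    sum_const, nsmul_eq_mul]

namespace SimpleGraph

/-- Each fibre `f⁻¹ d` is a clique or an independent set according to `R d d`, and two distinct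
fibres are completely joined or not joined at all according to `R d e`. -/
def IsBlowup (G : SimpleGraph V) (f : V → ι) (R : ι → ι → Prop) : Prop :=
  ∀ x y, G.Adj x y ↔ x ≠ y ∧ R (f x) (f y)

variable [Fintype ι] {R : ι → ι → Prop} [DecidableRel R]

variable (K) in
def blowupLap (f : V → ι) (R : ι → ι → Prop) [DecidableRel R] : Matrix ι ι K :=
  diagonal (fun d => ∑ e with R d e, (#{x | f x = e} : K)) -
    of fun d e => if R d e then (#{x | f x = e} : K) else 0

theorem blowupLap_mulVec_apply (v : ι → K) (d : ι) :
    (blowupLap K f R *ᵥ v) d = ∑ e with R d e, #{x | f x = e} * (v d - v e) := by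
  rw [blowupLap, sub_mulVec, Pi.sub_apply, mulVec_diagonal, sum_mul]
  simp only [mulVec, dotProduct, of_apply, ite_mul, zero_mul, ← sum_filter, mul_sub,
    sum_sub_distrib]

theorem blowupLap_transpose_mulVec_apply [Std.Symm R] (q : ι → K) (d : ι) :
    ((blowupLap K f R)ᵀ *ᵥ q) d =
      ∑ e with R d e, (#{x | f x = e} * q d - #{x | f x = d} * q e) := by
  rw [blowupLap, transpose_sub, diagonal_transpose, sub_mulVec, Pi.sub_apply, mulVec_diagonal,
    sum_mul]
  simp only [mulVec, dotProduct, transpose_apply, of_apply, ite_mul, zero_mul, ← sum_filter,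
    Std.Symm.iff _ d, sum_sub_distrib]

variable [DecidableEq V] {G : SimpleGraph V} [DecidableRel G.Adj]

namespace IsBlowup

variable (hG : G.IsBlowup f R)
include hG

theorem sum_neighborFinset (u : V → K) (x : V) :
    ∑ y ∈ G.neighborFinset x, u y =
      ∑ e with R (f x) e, fiberSum f u e - if R (f x) (f x) then u x else 0 := by
  have hnbr :
      G.neighborFinset x = ({y | f y ∈ ({e | R (f x) e} : Finset ι)} : Finset V).erase x := by
    ext y
    simp [hG x y, and_comm, eq_comm]
  unfold fiberSum
  rw [hnbr, sum_fiberwise_eq_sum_filter]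
  split_ifs with hx
  · rw [sum_erase_eq_sub (by simpa using hx)]
  · rw [erase_eq_of_notMem (by simpa using hx), sub_zero]

theorem lapMatrix_mulVec_apply (u : V → K) (x : V) :
    (G.lapMatrix K *ᵥ u) x = ∑ e with R (f x) e, (#{y | f y = e} * u x - fiberSum f u e) := by
  have hdeg : (G.degree x : K) =
      ∑ e with R (f x) e, (#{y | f y = e} : K) - if R (f x) (f x) then 1 else 0 := by
    have h := hG.sum_neighborFinset (fun _ => (1 : K)) x
    simp only [sum_const, nsmul_eq_mul, mul_one, card_neighborFinset_eq_degree] at h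
    simpa [fiberSum] using h
  rw [SimpleGraph.lapMatrix_mulVec_apply, hG.sum_neighborFinset, hdeg, sum_sub_distrib,
    ← sum_mul]
  split_ifs <;> ring

theorem lapMatrix_mulVec_comp (v : ι → K) :
    G.lapMatrix K *ᵥ (v ∘ f) = (blowupLap K f R *ᵥ v) ∘ f := by
  ext x
  rw [Function.comp_apply, hG.lapMatrix_mulVec_apply, blowupLap_mulVec_apply]
  exact sum_congr rfl fun e _ => by rw [fiberSum_comp, Function.comp_apply, mul_sub]

theorem fiberSum_lapMatrix_mulVec [Std.Symm R] (u : V → K) :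
    fiberSum f (G.lapMatrix K *ᵥ u) = (blowupLap K f R)ᵀ *ᵥ fiberSum f u := by
  ext d
  rw [blowupLap_transpose_mulVec_apply, fiberSum,
    sum_congr rfl fun x hx => by rw [hG.lapMatrix_mulVec_apply, (mem_filter.mp hx).2], sum_comm]
  refine sum_congr rfl fun e _ => ?_
  rw [sum_sub_distrib, ← mul_sum, sum_const, nsmul_eq_mul]
  rfl

end IsBlowup

end SimpleGraph

end Blowup

namespace SimpleGraph.IsBlowup

variable {V ι K : Type*} [Fintype V] [DecidableEq V] [Fintype ι] [DecidableEq ι] [Field K]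
  {G : SimpleGraph V} [DecidableRel G.Adj] {f : V → ι} {R : ι → ι → Prop} [DecidableRel R]
  (hG : G.IsBlowup f R)
include hG

theorem mem_spectrum_lapMatrix (hf : Function.Surjective f) {z : K}
    (hz : z ∈ spectrum K (blowupLap K f R)) : z ∈ spectrum K (G.lapMatrix K) := by
  obtain ⟨v, hv0, hv⟩ := mem_spectrum_iff_exists_mulVec_eq_smul.mp hz
  refine mem_spectrum_iff_exists_mulVec_eq_smul.mpr ⟨v ∘ f, ?_, ?_⟩
  · exact fun h => hv0 (hf.injective_comp_right h)
  · rw [hG.lapMatrix_mulVec_comp, hv]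
    rfl

theorem mem_spectrum_blowupLap_or_eq_sum_card [Std.Symm R] {z : K} (hz : z ∈ spectrum K (G.lapMatrix K)) :
    z ∈ spectrum K (blowupLap K f R) ∨ ∃ x, z = ∑ e with R (f x) e, (#{y | f y = e} : K) := by
  obtain ⟨u, hu0, hu⟩ := mem_spectrum_iff_exists_mulVec_eq_smul.mp hz
  by_cases hsum : fiberSum f u = 0
  · right
    obtain ⟨x, hx⟩ := Function.ne_iff.mp hu0
    refine ⟨x, mul_right_cancel₀ hx ?_⟩
    have hLu := congrFun hu x
    simp only [hG.lapMatrix_mulVec_apply, hsum, Pi.zero_apply, sub_zero, Pi.smul_apply,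
      smul_eq_mul] at hLu
    rw [← hLu, sum_mul]
  · left
    rw [← spectrum_transpose]
    refine mem_spectrum_iff_exists_mulVec_eq_smul.mpr ⟨_, hsum, ?_⟩
    rw [← hG.fiberSum_lapMatrix_mulVec, hu]
    ext d
    simp [fiberSum, mul_sum]

end SimpleGraph.IsBlowup

section ZeroDivisorGraph

variable {n : ℕ}

theorem filter_upsilon_adj_eq_erase (d : {d // d ∈ properDivs n}) :
    ({e | (upsilon n).Adj d e} : Finset _) = ({e | n ∣ d.1 * e.1} : Finset _).erase d := by
  ext e
  rw [mem_filter, mem_erase, mem_filter]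
  simp only [mem_univ, true_and, upsilon, ne_comm]

variable [NeZero n]

theorem mem_properDivs {d : ℕ} : d ∈ properDivs n ↔ d ∣ n ∧ 1 < d ∧ d < n := by
  simp [properDivs, Nat.mem_divisors, NeZero.ne n]

theorem ZMod.mul_eq_zero_iff_dvd_val_mul_val {x y : ZMod n} :
    x * y = 0 ↔ n ∣ x.val * y.val := by
  rw [← ZMod.natCast_eq_zero_iff, Nat.cast_mul, ZMod.natCast_zmod_val, ZMod.natCast_zmod_val]

theorem ZMod.nonzero_zeroDivisor_iff_gcd_val_mem_properDivs {x : ZMod n} :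
    (x ≠ 0 ∧ ∃ y : ZMod n, y ≠ 0 ∧ x * y = 0) ↔ n.gcd x.val ∈ properDivs n := by
  have hn : 0 < n := NeZero.pos n
  rw [mem_properDivs]
  constructor
  · rintro ⟨hx, y, hy, hxy⟩
    refine ⟨Nat.gcd_dvd_left _ _, ?_, ?_⟩
    · by_contra! h
      interval_cases hg : n.gcd x.val
      · exact NeZero.ne n (Nat.eq_zero_of_gcd_eq_zero_left hg)
      · have hunit : IsUnit x := by
          simpa using (ZMod.isUnit_iff_coprime x.val n).mpr (Nat.coprime_comm.mp hg)
        exact hy (hunit.mul_right_eq_zero.mp hxy)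
    · have hval : 0 < x.val := Nat.pos_of_ne_zero ((ZMod.val_ne_zero x).mpr hx)
      exact (Nat.le_of_dvd hval (Nat.gcd_dvd_right _ _)).trans_lt x.val_lt
  · rintro ⟨hdvd, hd1, hdn⟩
    set d := n.gcd x.val
    have hnd : 0 < n / d := Nat.div_pos (Nat.le_of_dvd hn hdvd) (by omega)
    refine ⟨fun hx => by simp [d, hx] at hdn, ((n / d : ℕ) : ZMod n), ?_, ?_⟩
    · rw [Ne, ZMod.natCast_eq_zero_iff]
      exact fun h => hnd.ne' (Nat.eq_zero_of_dvd_of_lt h (Nat.div_lt_self hn hd1))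
    · rw [← ZMod.natCast_zmod_val x, ← Nat.cast_mul, ZMod.natCast_eq_zero_iff]
      calc n = d * (n / d) := (Nat.mul_div_cancel' hdvd).symm
        _ ∣ x.val * (n / d) := Nat.mul_dvd_mul_right (Nat.gcd_dvd_right _ _) _

variable (n) in
/-- The `d` with `v ∈ A_d`. -/
def zdDivisor (v : ZdVert n) : {d // d ∈ properDivs n} :=
  ⟨n.gcd (v : ZMod n).val, ZMod.nonzero_zeroDivisor_iff_gcd_val_mem_properDivs.mp v.2⟩

theorem zdGraph_isBlowup : (zdGraph n).IsBlowup (zdDivisor n) (fun d e => n ∣ d.1 * e.1) :=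
  fun _ _ => and_congr_right' <|
    ZMod.mul_eq_zero_iff_dvd_val_mul_val.trans Nat.dvd_gcd_mul_gcd_iff_dvd_mul.symm

theorem card_zdDivisor_fiber (d : {d // d ∈ properDivs n}) :
    #{v | zdDivisor n v = d} = Nat.totient (n / d) := by
  rw [Nat.totient_div_of_dvd (mem_properDivs.mp d.2).1]
  refine card_bij' (fun v _ => (v : ZMod n).val)
    (fun k hk => ⟨k, ZMod.nonzero_zeroDivisor_iff_gcd_val_mem_properDivs.mpr ?_⟩) ?_ ?_ ?_ ?_
  · rw [mem_filter, mem_range] at hk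
    rw [ZMod.val_natCast_of_lt hk.1, hk.2]
    exact d.2
  · intro v hv
    rw [mem_filter] at hv ⊢
    exact ⟨mem_range.mpr (ZMod.val_lt _), congrArg Subtype.val hv.2⟩
  · intro k hk
    rw [mem_filter, mem_range] at hk
    refine mem_filter.mpr ⟨mem_univ _, Subtype.ext ?_⟩
    simp only [zdDivisor, ZMod.val_natCast_of_lt hk.1, hk.2]
  · intro v _
    exact Subtype.ext (ZMod.natCast_zmod_val _)
  · intro k hk
    exact ZMod.val_natCast_of_lt (mem_range.mp (mem_filter.mp hk).1)

theorem zdDivisor_surjective : Function.Surjective (zdDivisor n) := by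
  intro d
  obtain ⟨hdvd, hd1, -⟩ := mem_properDivs.mp d.2
  have hpos : 0 < #{v | zdDivisor n v = d} := by
    rw [card_zdDivisor_fiber]
    exact Nat.totient_pos.mpr (Nat.div_pos (Nat.le_of_dvd (NeZero.pos n) hdvd) (by omega))
  obtain ⟨v, hv⟩ := card_pos.mp hpos
  exact ⟨v, (mem_filter.mp hv).2⟩

theorem wLap_map_ofReal :
    (wLap n).map Complex.ofReal =
      SimpleGraph.blowupLap ℂ (zdDivisor n) (fun d e => n ∣ d.1 * e.1) := by
  ext d e
  simp only [map_apply, wLap, SimpleGraph.blowupLap, Matrix.sub_apply, diagonal_apply, of_apply,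
    card_zdDivisor_fiber]
  by_cases hde : d = e
  · subst hde
    simp only [if_true, Mweight, filter_upsilon_adj_eq_erase]
    push_cast
    split_ifs with hdd
    · rw [sum_erase_eq_sub (by simpa using hdd)]
    · rw [erase_eq_of_notMem (by simpa using hdd), sub_zero]
  · simp only [hde, if_false, upsilon, ne_eq, not_false_eq_true, true_and, zero_sub]
    split_ifs <;> simp

end ZeroDivisorGraph

theorem zdGraph_laplacian_integral_iff_general (n : ℕ) [NeZero n] :
    (∀ z ∈ spectrum ℂ (((zdGraph n).lapMatrix ℝ).map Complex.ofReal), ∃ a : ℤ, z = a) ↔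
    (∀ z ∈ spectrum ℂ ((wLap n).map Complex.ofReal), ∃ a : ℤ, z = a) := by
  have hG := zdGraph_isBlowup (n := n)
  have : Std.Symm fun d e : {d // d ∈ properDivs n} => n ∣ d.1 * e.1 :=
    ⟨fun d e h => by rwa [mul_comm]⟩
  have hL : ((zdGraph n).lapMatrix ℝ).map Complex.ofReal = (zdGraph n).lapMatrix ℂ :=
    (zdGraph n).map_lapMatrix Complex.ofRealHom
  rw [hL, wLap_map_ofReal]
  refine ⟨fun h z hz => h z (hG.mem_spectrum_lapMatrix zdDivisor_surjective hz), fun h z hz => ?_⟩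
  rcases hG.mem_spectrum_blowupLap_or_eq_sum_card hz with hz | ⟨x, rfl⟩
  · exact h z hz
  · exact ⟨∑ e with n ∣ (zdDivisor n x).1 * e.1, #{y | zdDivisor n y = e}, by push_cast; rfl⟩

/-- For composite `n ≥ 4`, the zero divisor graph `Γ(ZMod n)` is Laplacian integral iff
all eigenvalues of the vertex weighted Laplacian matrix `L(Υ_n)` are integers. -/
theorem zdGraph_laplacian_integral_iff (n : ℕ) [NeZero n] (hn : 4 ≤ n)
    (hcomp : ¬ n.Prime) :
    (∀ z ∈ spectrum ℂ (((zdGraph n).lapMatrix ℝ).map Complex.ofReal), ∃ a : ℤ, z = a) ↔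
    (∀ z ∈ spectrum ℂ ((wLap n).map Complex.ofReal), ∃ a : ℤ, z = a) :=
  zdGraph_laplacian_integral_iff_general n
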